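/- For t stacks in series, every permutation that is sorted by the right-greedy algorithm is also sorted by the left-greedy algorithm. -/

import Mathlib

/-- A configuration for sorting with `t` stacks in series: the remaining input,
the stacks (index `0` is the leftmost, next to the output; index `t-1` is the
rightmost, next to the input; the head of each list is the top of the stack),
and the output produced so far. -/
structure Conf where
  input : List ℕ
  stks : List (List ℕ)
  output : List ℕ
deriving DecidableEq, Repr

/-- `x` may be placed on top of a stack iff the stack is empty or `x` is smaller
than the current top (stacks are increasing from top to bottom). -/
def canPush (x : ℕ) : List ℕ → Bool
  | [] => true
  | y :: _ => decide (x < y)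

/-- Moves, ordered left to right: `0` = pop the leftmost stack to the output
(legal only for the next element of the identity); `m` with `0 < m < t` = move the
top of stack `m` one stack to the left; `t` = push the next input element onto the
rightmost stack. -/
def legal (t : ℕ) (c : Conf) (m : ℕ) : Bool :=
  if m = 0 then
    match c.stks.getD 0 [] with
    | x :: _ => x == c.output.length + 1
    | [] => false
  else if m < t then
    match c.stks.getD m [] with
    | x :: _ => canPush x (c.stks.getD (m-1) [])
    | [] => false
  else if m = t then
    match c.input with
    | x :: _ => canPush x (c.stks.getD (t-1) [])
    | [] => false
  else false

/-- Perform move `m` on configuration `c` (with `t` stacks). -/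
def applyMove (t : ℕ) (c : Conf) (m : ℕ) : Conf :=
  if m = 0 then
    match c.stks.getD 0 [] with
    | x :: s => ⟨c.input, c.stks.set 0 s, c.output ++ [x]⟩
    | [] => c
  else if m < t then
    match c.stks.getD m [] with
    | x :: s => ⟨c.input, (c.stks.set m s).set (m-1) (x :: c.stks.getD (m-1) []), c.output⟩
    | [] => c
  else
    match c.input with
    | x :: rest => ⟨rest, c.stks.set (t-1) (x :: c.stks.getD (t-1) []), c.output⟩
    | [] => c

def initConf (t : ℕ) (p : List ℕ) : Conf := ⟨p, List.replicate t [], []⟩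

/-- The fully sorted configuration: empty input and stacks, output `1,2,...,n`. -/
def finalConf (t n : ℕ) : Conf := ⟨[], List.replicate t [], List.range' 1 n⟩

/-- Run a sequence of moves, requiring each to be legal. -/
def runLegal (t : ℕ) : Conf → List ℕ → Option Conf
  | c, [] => some c
  | c, m :: ms => if legal t c m then runLegal t (applyMove t c m) ms else none

/-- `p` is sortable by `t` stacks in series by some sequence of legal moves. -/
def Sortable (t : ℕ) (p : List ℕ) : Prop :=
  ∃ ms : List ℕ, runLegal t (initConf t p) ms = some (finalConf t p.length)

/-- The leftmost legal move, if any. -/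
def leftMove (t : ℕ) (c : Conf) : Option ℕ :=
  ((List.range (t+1)).filter (fun m => legal t c m)).head?

/-- The rightmost legal move, if any. -/
def rightMove (t : ℕ) (c : Conf) : Option ℕ :=
  ((List.range (t+1)).filter (fun m => legal t c m)).getLast?

/-- One step of a greedy algorithm given by the move selector `mv`
(the configuration is unchanged if no move is legal, i.e. the algorithm fails or is done). -/
def greedyStep (mv : ℕ → Conf → Option ℕ) (t : ℕ) (c : Conf) : Conf :=
  match mv t c with
  | some m => applyMove t c m
  | none => c

/-- The greedy algorithm given by `mv` sorts `p` with `t` stacks in series. -/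
def GreedySorts (mv : ℕ → Conf → Option ℕ) (t : ℕ) (p : List ℕ) : Prop :=
  ∃ k : ℕ, (greedyStep mv t)^[k] (initConf t p) = finalConf t p.length

def LeftGreedySorts : ℕ → List ℕ → Prop := GreedySorts leftMove
def RightGreedySorts : ℕ → List ℕ → Prop := GreedySorts rightMove

/-- `p` is a permutation of `1,...,n` (as a list). -/
def IsPermOf (n : ℕ) (p : List ℕ) : Prop := p.Perm (List.range' 1 n)

/-- The position of the element `x` in configuration `c`: `0` if in the output
(furthest left), `j+1` if in stack `j`, `t+1` if still in the input (furthest right). -/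
def posOf (t : ℕ) (c : Conf) (x : ℕ) : ℕ :=
  if x ∈ c.output then 0
  else match (List.range t).find? (fun j => decide (x ∈ c.stks.getD j [])) with
    | some j => j + 1
    | none => t + 1

/-- `c` is at the `i`-th critical moment for the greedy algorithm `mv` on a
permutation of length `n`: either the chosen move is the entry of the `i`-th
element into the stacks, or the algorithm fails (no legal move, incomplete output). -/
def IsCrit (mv : ℕ → Conf → Option ℕ) (t i n : ℕ) (c : Conf) : Prop :=
  (c.input.length + i = n + 1 ∧ mv t c = some t) ∨
  (mv t c = none ∧ c.output.length < n)

/-- `c` is the configuration at the `i`-th critical moment of the greedy algorithm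
`mv` run on `p` (the first moment along the run satisfying `IsCrit`). -/
def CritConf (mv : ℕ → Conf → Option ℕ) (t i n : ℕ) (p : List ℕ) (c : Conf) : Prop :=
  ∃ k : ℕ, (greedyStep mv t)^[k] (initConf t p) = c ∧ IsCrit mv t i n c ∧
    ∀ k' < k, ¬ IsCrit mv t i n ((greedyStep mv t)^[k'] (initConf t p))

/-- No stack is empty while some stack to its right is nonempty. -/
def NoGap (t : ℕ) (c : Conf) : Prop :=
  ∀ j j' : ℕ, j < j' → j' < t → c.stks.getD j' [] ≠ [] → c.stks.getD j [] ≠ []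

/-- `r` contains `q` as a pattern. -/
def ContainsPat (r q : List ℕ) : Prop :=
  ∃ f : Fin q.length → Fin r.length, StrictMono f ∧
    ∀ a b : Fin q.length, q.get a < q.get b ↔ r.get (f a) < r.get (f b)

/-!
Run the two algorithms side by side and call a configuration *settled* if no move other than a
push is legal. The invariant is: the left-greedy configuration is settled, both have the same
remaining input, and every element is at least as far to the left (output < stack 0 < ⋯ <
input) in the left-greedy configuration as in the right-greedy one. A right-greedy pop or shift
keeps it, because the moved element is already far enough left in the settled configuration,
which could otherwise pop or shift it itself; for a shift this uses that every shift further
right is illegal, i.e. that the right-greedy algorithm chose the rightmost legal move. When the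
right-greedy algorithm pushes, the left-greedy one can push the same element and then pops and
shifts until it is settled again; this terminates because every such move decreases the sum of
the positions of the elements, and it only moves elements to the left. Once the right-greedy run
has sorted the permutation, the invariant puts every element into the left-greedy output too.
-/

section ListLemmas

variable {α : Type*}

lemma List.getD_set_of_lt {L : List α} {i : ℕ} (h : i < L.length) (a d : α) (j : ℕ) :
    (L.set i a).getD j d = if j = i then a else L.getD j d := by
  simp only [List.getD_eq_getElem?_getD, List.getElem?_set]
  grind

lemma List.perm_flatten_set {L : List (List α)} {i : ℕ} (h : i < L.length) (s : List α) :
    (L.getD i [] ++ (L.set i s).flatten).Perm (s ++ L.flatten) := by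
  simpa [List.getD_eq_getElem?_getD, List.getElem?_eq_getElem h] using
    (L.getD_set_perm_cons i s).flatten

lemma List.perm_cons_flatten_set_tail {L : List (List α)} {i : ℕ} (h : i < L.length) {x : α}
    {s : List α} (hx : L.getD i [] = x :: s) : (x :: (L.set i s).flatten).Perm L.flatten := by
  have := List.perm_flatten_set h s
  rw [hx, List.cons_append] at this
  exact (List.perm_append_left_iff s).1 (List.perm_middle.trans this)

lemma List.perm_flatten_set_cons {L : List (List α)} {i : ℕ} (h : i < L.length) (x : α) :
    (L.set i (x :: L.getD i [])).flatten.Perm (x :: L.flatten) := by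
  have := List.perm_flatten_set h (x :: L.getD i [])
  rw [List.cons_append] at this
  exact (List.perm_append_left_iff _).1 (this.trans List.perm_middle.symm)

end ListLemmas

namespace Conf

def stack (c : Conf) (j : ℕ) : List ℕ := c.stks.getD j []

def LeftOf (c : Conf) (j x : ℕ) : Prop := x ∈ c.output ∨ ∃ i < j, x ∈ c.stack i

def contents (c : Conf) : List ℕ := c.output ++ c.stks.flatten ++ c.input

variable {c : Conf} {i j j' x : ℕ}

@[simp] lemma stack_mk (i o : List ℕ) (L : List (List ℕ)) (j : ℕ) :
    (⟨i, L, o⟩ : Conf).stack j = L.getD j [] := rfl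

lemma lt_length_of_mem_stack (h : x ∈ c.stack j) : j < c.stks.length := by
  by_contra hj
  rw [stack, List.getD_eq_default _ _ (not_lt.1 hj)] at h
  simp at h

lemma stack_eq_getElem (h : j < c.stks.length) : c.stack j = c.stks[j] := by
  rw [stack, List.getD_eq_getElem _ _ h]

lemma mem_stks_flatten : x ∈ c.stks.flatten ↔ ∃ j, x ∈ c.stack j := by
  rw [List.mem_flatten]
  constructor
  · rintro ⟨l, hl, hx⟩
    obtain ⟨j, hj, rfl⟩ := List.mem_iff_getElem.1 hl
    exact ⟨j, by rwa [stack_eq_getElem hj]⟩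
  · rintro ⟨j, hx⟩
    have hj := lt_length_of_mem_stack hx
    exact ⟨_, List.getElem_mem hj, by rwa [← stack_eq_getElem hj]⟩

lemma mem_contents :
    x ∈ c.contents ↔ x ∈ c.output ∨ (∃ j, x ∈ c.stack j) ∨ x ∈ c.input := by
  rw [contents, List.mem_append, List.mem_append, mem_stks_flatten, or_assoc]

lemma LeftOf.mono (h : j ≤ j') : c.LeftOf j x → c.LeftOf j' x :=
  Or.imp_right fun ⟨i, hi, hx⟩ => ⟨i, hi.trans_le h, hx⟩

lemma leftOf_zero_iff : c.LeftOf 0 x ↔ x ∈ c.output := by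
  simp [LeftOf]

end Conf

open Conf

lemma canPush_cons {x y : ℕ} {l : List ℕ} : canPush x (y :: l) = true ↔ x < y := by
  simp [canPush]

section Moves

variable {t m x j y : ℕ} {s : List ℕ} {c : Conf}

lemma legal_zero_iff : legal t c 0 = true ↔ ∃ s, c.stack 0 = (c.output.length + 1) :: s := by
  unfold stack
  rw [legal, if_pos rfl]
  cases c.stks.getD 0 [] <;> simp

lemma legal_shift_iff (h0 : 0 < m) (hm : m < t) :
    legal t c m = true ↔ ∃ x s, c.stack m = x :: s ∧ canPush x (c.stack (m-1)) = true := by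
  unfold stack
  rw [legal, if_neg h0.ne', if_pos hm]
  cases c.stks.getD m [] <;> simp

lemma legal_push_iff (ht : 0 < t) :
    legal t c t = true ↔ ∃ x r, c.input = x :: r ∧ canPush x (c.stack (t-1)) = true := by
  unfold stack
  rw [legal, if_neg ht.ne', if_neg (lt_irrefl t), if_pos rfl]
  cases c.input <;> simp

lemma applyMove_zero (hx : c.stack 0 = x :: s) :
    applyMove t c 0 = ⟨c.input, c.stks.set 0 s, c.output ++ [x]⟩ := by
  rw [stack] at hx
  rw [applyMove, if_pos rfl, hx]

lemma applyMove_shift (h0 : 0 < m) (hm : m < t) (hx : c.stack m = x :: s) :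
    applyMove t c m =
      ⟨c.input, (c.stks.set m s).set (m-1) (x :: c.stack (m-1)), c.output⟩ := by
  rw [stack] at hx
  rw [applyMove, if_neg h0.ne', if_pos hm, hx]
  rfl

lemma applyMove_push {r : List ℕ} (ht : 0 < t) (hx : c.input = x :: r) :
    applyMove t c t = ⟨r, c.stks.set (t-1) (x :: c.stack (t-1)), c.output⟩ := by
  rw [applyMove, if_neg ht.ne', if_neg (lt_irrefl t), hx]
  rfl

lemma input_applyMove_of_lt (hm : m < t) : (applyMove t c m).input = c.input := by
  unfold applyMove
  split_ifs
  all_goals split <;> rfl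

lemma length_stks_applyMove : (applyMove t c m).stks.length = c.stks.length := by
  unfold applyMove
  split_ifs
  all_goals split <;> simp

lemma output_applyMove_zero (hx : c.stack 0 = x :: s) :
    (applyMove t c 0).output = c.output ++ [x] := by
  rw [applyMove_zero hx]

lemma output_applyMove_of_pos (h0 : 0 < m) : (applyMove t c m).output = c.output := by
  unfold applyMove
  rw [if_neg h0.ne']
  split_ifs
  all_goals split <;> rfl

lemma stack_applyMove_zero (hx : c.stack 0 = x :: s) (j : ℕ) :
    (applyMove t c 0).stack j = if j = 0 then s else c.stack j := by
  have h0 := c.lt_length_of_mem_stack (hx ▸ List.mem_cons_self)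
  rw [applyMove_zero hx, stack_mk, List.getD_set_of_lt h0]
  rfl

lemma stack_applyMove_shift (h0 : 0 < m) (hm : m < t) (hx : c.stack m = x :: s) (j : ℕ) :
    (applyMove t c m).stack j =
      if j = m - 1 then x :: c.stack (m-1) else if j = m then s else c.stack j := by
  have hmc := c.lt_length_of_mem_stack (hx ▸ List.mem_cons_self)
  rw [applyMove_shift h0 hm hx, stack_mk, List.getD_set_of_lt (by simp; omega),
    List.getD_set_of_lt hmc]
  rfl

lemma stack_applyMove_push {r : List ℕ} (ht : 0 < t) (hlen : c.stks.length = t)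
    (hx : c.input = x :: r) (j : ℕ) :
    (applyMove t c t).stack j = if j = t - 1 then x :: c.stack (t-1) else c.stack j := by
  rw [applyMove_push ht hx, stack_mk, List.getD_set_of_lt (by omega)]
  rfl

lemma contents_applyMove_zero_perm (hx : c.stack 0 = x :: s) :
    (applyMove t c 0).contents.Perm c.contents := by
  have h0 := c.lt_length_of_mem_stack (hx ▸ List.mem_cons_self)
  rw [applyMove_zero hx]
  simp only [contents, List.append_assoc, List.singleton_append]
  exact ((List.perm_cons_flatten_set_tail h0 hx).append_right _).append_left _

lemma contents_applyMove_shift_perm (h0 : 0 < m) (hm : m < t) (hx : c.stack m = x :: s) :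
    (applyMove t c m).contents.Perm c.contents := by
  have hmc := c.lt_length_of_mem_stack (hx ▸ List.mem_cons_self)
  have hm1 : c.stack (m-1) = (c.stks.set m s).getD (m-1) [] := by
    rw [List.getD_set_of_lt hmc, if_neg (by omega)]; rfl
  rw [applyMove_shift h0 hm hx, hm1]
  simp only [contents, List.append_assoc]
  refine ((?_ : List.Perm _ _).append_right _).append_left _
  exact (List.perm_flatten_set_cons (by simp; omega) x).trans
    (List.perm_cons_flatten_set_tail hmc hx)

lemma contents_applyMove_push_perm {r : List ℕ} (ht : 0 < t) (hlen : c.stks.length = t)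
    (hx : c.input = x :: r) : (applyMove t c t).contents.Perm c.contents := by
  rw [applyMove_push ht hx]
  simp only [contents, hx, List.append_assoc]
  refine (?_ : List.Perm _ _).append_left _
  exact ((List.perm_flatten_set_cons (by omega) x).append_right r).trans List.perm_middle.symm

lemma leftOf_applyMove_zero_iff (hx : c.stack 0 = x :: s) :
    (applyMove t c 0).LeftOf j y ↔ c.LeftOf j y ∨ y = x := by
  simp only [LeftOf, stack_applyMove_zero hx, output_applyMove_zero hx, List.mem_append,
    List.mem_singleton]
  constructor
  · rintro ((hy | rfl) | ⟨i, hi, hy⟩)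
    · exact .inl (.inl hy)
    · exact .inr rfl
    · refine .inl (.inr ⟨i, hi, ?_⟩)
      split_ifs at hy with h
      · simp [h, hx, hy]
      · exact hy
  · rintro ((hy | ⟨i, hi, hy⟩) | rfl)
    · exact .inl (.inl hy)
    · rcases eq_or_ne i 0 with rfl | h
      · rw [hx, List.mem_cons] at hy
        exact hy.imp .inr fun hy => ⟨0, hi, by simpa⟩
      · exact .inr ⟨i, hi, by simpa [h]⟩
    · exact .inl (.inr rfl)

lemma leftOf_applyMove_shift_iff (h0 : 0 < m) (hm : m < t) (hx : c.stack m = x :: s) :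
    (applyMove t c m).LeftOf j y ↔ c.LeftOf j y ∨ (y = x ∧ m ≤ j) := by
  simp only [LeftOf, stack_applyMove_shift h0 hm hx, output_applyMove_of_pos h0]
  constructor
  · rintro (hy | ⟨i, hi, hy⟩)
    · exact .inl (.inl hy)
    split_ifs at hy with h1 h2
    · rcases List.mem_cons.1 hy with rfl | hy
      · exact .inr ⟨rfl, by omega⟩
      · exact .inl (.inr ⟨m - 1, h1 ▸ hi, hy⟩)
    · exact .inl (.inr ⟨i, hi, by simp [h2, hx, hy]⟩)
    · exact .inl (.inr ⟨i, hi, hy⟩)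
  · rintro ((hy | ⟨i, hi, hy⟩) | ⟨rfl, hj⟩)
    · exact .inl hy
    · refine .inr ?_
      by_cases h1 : i = m - 1
      · exact ⟨i, hi, by subst h1; simp [hy]⟩
      by_cases h2 : i = m
      · rw [h2, hx, List.mem_cons] at hy
        rcases hy with rfl | hy
        · exact ⟨m - 1, by omega, by simp⟩
        · exact ⟨m, h2 ▸ hi, by simp [show m ≠ m - 1 by omega, hy]⟩
      · exact ⟨i, hi, by simp [h1, h2, hy]⟩
    · exact .inr ⟨m - 1, by omega, by simp⟩

lemma leftOf_applyMove_push_iff {r : List ℕ} (ht : 0 < t) (hlen : c.stks.length = t)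
    (hx : c.input = x :: r) :
    (applyMove t c t).LeftOf j y ↔ c.LeftOf j y ∨ (y = x ∧ t ≤ j) := by
  simp only [LeftOf, stack_applyMove_push ht hlen hx, output_applyMove_of_pos ht]
  constructor
  · rintro (hy | ⟨i, hi, hy⟩)
    · exact .inl (.inl hy)
    split_ifs at hy with h1
    · rcases List.mem_cons.1 hy with rfl | hy
      · exact .inr ⟨rfl, by omega⟩
      · exact .inl (.inr ⟨t - 1, h1 ▸ hi, hy⟩)
    · exact .inl (.inr ⟨i, hi, hy⟩)
  · rintro ((hy | ⟨i, hi, hy⟩) | ⟨rfl, hj⟩)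
    · exact .inl hy
    · by_cases h1 : i = t - 1
      · exact .inr ⟨i, hi, by subst h1; simp [hy]⟩
      · exact .inr ⟨i, hi, by simp [h1, hy]⟩
    · exact .inr ⟨t - 1, by omega, by simp⟩

lemma input_applyMove_push {r : List ℕ} (ht : 0 < t)
    (hx : c.input = x :: r) : (applyMove t c t).input = r := by
  rw [applyMove_push ht hx]

end Moves

lemma List.Pairwise.cons_of_canPush {x : ℕ} {l : List ℕ} (hl : l.Pairwise (· < ·))
    (h : canPush x l = true) : (x :: l).Pairwise (· < ·) := by
  cases l with
  | nil => simp
  | cons y l =>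
    rw [canPush_cons] at h
    exact List.pairwise_cons.2 ⟨by grind [List.pairwise_cons], hl⟩

namespace Conf

structure Valid (t n : ℕ) (c : Conf) : Prop where
  length_stks : c.stks.length = t
  output_eq : c.output = List.range' 1 c.output.length
  pairwise_stack : ∀ j, (c.stack j).Pairwise (· < ·)
  perm : c.contents.Perm (List.range' 1 n)

namespace Valid

variable {t n i j x y : ℕ} {l : List ℕ} {c : Conf}

lemma lt_of_mem_stack (hc : c.Valid t n) (h : x ∈ c.stack j) : j < t :=
  hc.length_stks ▸ c.lt_length_of_mem_stack h

lemma mem_range' (hc : c.Valid t n) (h : x ∈ c.contents) : x ∈ List.range' 1 n :=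
  hc.perm.subset h

lemma nodup (hc : c.Valid t n) : c.contents.Nodup :=
  hc.perm.nodup_iff.2 List.nodup_range'

lemma not_mem_output_of_mem_stack (hc : c.Valid t n) (h : x ∈ c.stack j) : x ∉ c.output := by
  have := hc.nodup
  rw [contents, List.append_assoc, List.nodup_append] at this
  exact fun ho => this.2.2 x ho x (List.mem_append_left _ (mem_stks_flatten.2 ⟨j, h⟩)) rfl

lemma not_mem_input_of_mem_stack (hc : c.Valid t n) (h : x ∈ c.stack j) : x ∉ c.input := by
  have := hc.nodup
  rw [contents, List.nodup_append] at this
  exact fun hi => this.2.2 x (List.mem_append_right _ (mem_stks_flatten.2 ⟨j, h⟩)) x hi rfl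

lemma eq_of_mem_stack_of_mem_stack (hc : c.Valid t n) (hi : x ∈ c.stack i)
    (hj : x ∈ c.stack j) : i = j := by
  have := hc.nodup
  rw [contents, List.nodup_append, List.nodup_append, List.nodup_flatten,
    List.pairwise_iff_getElem] at this
  have hic := c.lt_length_of_mem_stack hi
  have hjc := c.lt_length_of_mem_stack hj
  rw [stack_eq_getElem hic] at hi
  rw [stack_eq_getElem hjc] at hj
  by_contra hne
  rcases Nat.lt_or_gt_of_ne hne with h | h
  · exact this.1.2.1.2 i j hic hjc h hi hj
  · exact this.1.2.1.2 j i hjc hic h hj hi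

lemma mem_output_iff (hc : c.Valid t n) : x ∈ c.output ↔ 1 ≤ x ∧ x ≤ c.output.length := by
  conv_lhs => rw [hc.output_eq]
  rw [List.mem_range'_1]
  omega

lemma output_length_lt_of_mem_stack (hc : c.Valid t n) (h : x ∈ c.stack j) :
    c.output.length < x := by
  have h1 : 1 ≤ x :=
    (List.mem_range'_1.1 (hc.mem_range' (mem_contents.2 (.inr (.inl ⟨j, h⟩))))).1
  by_contra hx
  exact hc.not_mem_output_of_mem_stack h (hc.mem_output_iff.2 ⟨h1, by omega⟩)

lemma head_le_of_mem_stack (hc : c.Valid t n) (hs : c.stack j = y :: l) (h : x ∈ c.stack j) :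
    y ≤ x := by
  have hp := hc.pairwise_stack j
  rw [hs] at hp h
  rcases List.mem_cons.1 h with rfl | h
  · exact le_rfl
  · exact (List.rel_of_pairwise_cons hp h).le

lemma not_leftOf_of_mem_stack (hc : c.Valid t n) (h : x ∈ c.stack j) : ¬ c.LeftOf j x := by
  rintro (ho | ⟨i, hi, hx⟩)
  · exact hc.not_mem_output_of_mem_stack h ho
  · exact hi.ne (hc.eq_of_mem_stack_of_mem_stack hx h)

end Valid

end Conf

lemma Conf.Valid.applyMove_of_legal {t n m : ℕ} {c : Conf} (hc : c.Valid t n)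
    (hl : legal t c m = true) :
    (applyMove t c m).Valid t n := by
  have hlen := (length_stks_applyMove (t := t) (m := m) (c := c)).trans hc.length_stks
  rcases Nat.eq_zero_or_pos m with rfl | h0
  · obtain ⟨s, hs⟩ := legal_zero_iff.1 hl
    refine ⟨hlen, ?_, fun j => ?_, (contents_applyMove_zero_perm hs).trans hc.perm⟩
    · rw [output_applyMove_zero hs, List.length_append, List.length_singleton, List.range'_concat,
        ← hc.output_eq]
      simp [add_comm]
    · have := hc.pairwise_stack 0
      rw [hs] at this
      rw [stack_applyMove_zero hs]
      split_ifs
      exacts [this.of_cons, hc.pairwise_stack j]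
  rcases lt_trichotomy m t with hm | rfl | hm
  · obtain ⟨x, s, hs, hx⟩ := (legal_shift_iff h0 hm).1 hl
    refine ⟨hlen, (output_applyMove_of_pos h0).symm ▸ hc.output_eq, fun j => ?_,
      (contents_applyMove_shift_perm h0 hm hs).trans hc.perm⟩
    have := hc.pairwise_stack m
    rw [hs] at this
    rw [stack_applyMove_shift h0 hm hs]
    split_ifs
    exacts [(hc.pairwise_stack _).cons_of_canPush hx, this.of_cons, hc.pairwise_stack j]
  · obtain ⟨x, r, hr, hx⟩ := (legal_push_iff h0).1 hl
    refine ⟨hlen, (output_applyMove_of_pos h0).symm ▸ hc.output_eq, fun j => ?_,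
      (contents_applyMove_push_perm h0 hc.length_stks hr).trans hc.perm⟩
    rw [stack_applyMove_push h0 hc.length_stks hr]
    split_ifs
    exacts [(hc.pairwise_stack _).cons_of_canPush hx, hc.pairwise_stack j]
  · simp [legal, h0.ne', hm.not_gt, hm.ne'] at hl

section Greedy

variable {t m k : ℕ} {c : Conf}

lemma le_of_legal (h : legal t c m = true) : m ≤ t := by
  by_contra hm
  simp [legal, show m ≠ 0 by omega, show ¬ m < t by omega, show m ≠ t by omega] at h

lemma mem_legal_filter :
    m ∈ (List.range (t+1)).filter (fun m => legal t c m) ↔ legal t c m = true := by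
  simpa [Nat.lt_succ_iff] using le_of_legal

lemma rightMove_eq_some (h : rightMove t c = some m) :
    legal t c m = true ∧ ∀ k, legal t c k = true → k ≤ m := by
  obtain ⟨ms, hms⟩ := List.getLast?_eq_some_iff.1 h
  have hp := hms ▸ List.pairwise_lt_range.filter (fun m => legal t c m)
  refine ⟨mem_legal_filter.1 (hms ▸ List.mem_concat_self), fun k hk => ?_⟩
  rcases List.mem_append.1 (hms ▸ mem_legal_filter.2 hk) with hk | hk
  · exact (List.pairwise_append.1 hp).2.2 k hk m (List.mem_singleton_self m) |>.le
  · exact (List.mem_singleton.1 hk).le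

lemma leftMove_eq_some (h : leftMove t c = some m) :
    legal t c m = true ∧ ∀ k, legal t c k = true → m ≤ k := by
  obtain ⟨ms, hms⟩ := List.head?_eq_some_iff.1 h
  have hp := hms ▸ List.pairwise_lt_range.filter (fun m => legal t c m)
  refine ⟨mem_legal_filter.1 (hms ▸ List.mem_cons_self), fun k hk => ?_⟩
  rcases List.mem_cons.1 (hms ▸ mem_legal_filter.2 hk) with rfl | hk
  · exact le_rfl
  · exact (List.rel_of_pairwise_cons hp hk).le

lemma exists_leftMove_eq_some (h : legal t c k = true) : ∃ m, leftMove t c = some m := by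
  refine Option.ne_none_iff_exists'.1 fun hn => ?_
  rw [leftMove, List.head?_eq_none_iff] at hn
  simpa [hn] using mem_legal_filter.2 h

def Settled (t : ℕ) (c : Conf) : Prop := ∀ m < t, legal t c m = false

lemma leftMove_eq_some_of_settled (hs : Settled t c) (h : legal t c t = true) :
    leftMove t c = some t := by
  obtain ⟨m, hm⟩ := exists_leftMove_eq_some h
  obtain ⟨hl, hmin⟩ := leftMove_eq_some hm
  have : ¬ m < t := fun hmt => by simp [hs m hmt] at hl
  rwa [le_antisymm (hmin t h) (not_lt.1 this)] at hm

lemma greedyStep_of_eq_some {mv : ℕ → Conf → Option ℕ} (h : mv t c = some m) :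
    greedyStep mv t c = applyMove t c m := by
  rw [greedyStep, h]

end Greedy

section Settling

open Finset

variable {t n m : ℕ} {c : Conf}

lemma leftOf_applyMove_of_lt (hm : m < t) (hl : legal t c m = true) {j x : ℕ}
    (h : c.LeftOf j x) : (applyMove t c m).LeftOf j x := by
  rcases Nat.eq_zero_or_pos m with rfl | h0
  · obtain ⟨s, hs⟩ := legal_zero_iff.1 hl
    exact (leftOf_applyMove_zero_iff hs).2 (.inl h)
  · obtain ⟨y, s, hs, -⟩ := (legal_shift_iff h0 hm).1 hl
    exact (leftOf_applyMove_shift_iff h0 hm hs).2 (.inl h)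

open Classical in
/-- The sum of the positions of the elements `≤ n`, counting the output as position `0`,
stack `j` as position `j + 1` and the input as position `t`. -/
noncomputable def positionSum (t n : ℕ) (c : Conf) : ℕ :=
  ∑ j ∈ range t, #{x ∈ range (n + 1) | ¬ c.LeftOf j x}

lemma positionSum_lt {c' : Conf} (hmono : ∀ j x, c.LeftOf j x → c'.LeftOf j x) {j x : ℕ}
    (hj : j < t) (hx : x ≤ n) (h : ¬ c.LeftOf j x) (h' : c'.LeftOf j x) :
    positionSum t n c' < positionSum t n c := by
  classical
  refine sum_lt_sum (fun i _ => card_le_card ?_) ⟨j, mem_range.2 hj, card_lt_card ?_⟩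
  · exact monotone_filter_right _ fun y _ hy hy' => hy (hmono i y hy')
  · refine ssubset_iff_of_subset (monotone_filter_right _ fun y _ hy hy' => hy (hmono j y hy'))
      |>.2 ⟨x, ?_, ?_⟩
    · simpa [Nat.lt_succ_iff] using ⟨hx, h⟩
    · simp [h']

lemma Conf.Valid.positionSum_applyMove_lt (hc : c.Valid t n) (hm : m < t)
    (hl : legal t c m = true) : positionSum t n (applyMove t c m) < positionSum t n c := by
  have hle {x j : ℕ} (hx : x ∈ c.stack j) : x ≤ n := by
    have := hc.mem_range' (mem_contents.2 (.inr (.inl ⟨j, hx⟩)))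
    rw [List.mem_range'_1] at this
    omega
  rcases Nat.eq_zero_or_pos m with rfl | h0
  · obtain ⟨s, hs⟩ := legal_zero_iff.1 hl
    exact positionSum_lt (fun _ _ => leftOf_applyMove_of_lt hm hl) hm
      (hle (hs ▸ List.mem_cons_self)) (hc.not_leftOf_of_mem_stack (hs ▸ List.mem_cons_self))
      ((leftOf_applyMove_zero_iff hs).2 (.inr rfl))
  · obtain ⟨y, s, hs, -⟩ := (legal_shift_iff h0 hm).1 hl
    exact positionSum_lt (fun _ _ => leftOf_applyMove_of_lt hm hl) hm
      (hle (hs ▸ List.mem_cons_self)) (hc.not_leftOf_of_mem_stack (hs ▸ List.mem_cons_self))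
      ((leftOf_applyMove_shift_iff h0 hm hs).2 (.inr ⟨rfl, le_rfl⟩))

end Settling

theorem Conf.Valid.exists_iterate_leftMove_settled {t n : ℕ} {c : Conf} (hc : c.Valid t n) :
    ∃ k c', (greedyStep leftMove t)^[k] c = c' ∧ c'.Valid t n ∧ Settled t c' ∧
      c'.input = c.input ∧ ∀ j x, c.LeftOf j x → c'.LeftOf j x := by
  by_cases hs : Settled t c
  · exact ⟨0, c, rfl, hc, hs, rfl, fun _ _ h => h⟩
  obtain ⟨m₀, hm₀, hl₀⟩ : ∃ m < t, legal t c m = true := by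
    simpa [Settled] using hs
  obtain ⟨m, hlm⟩ := exists_leftMove_eq_some hl₀
  obtain ⟨hl, hmin⟩ := leftMove_eq_some hlm
  have hm : m < t := (hmin m₀ hl₀).trans_lt hm₀
  have hdec := hc.positionSum_applyMove_lt hm hl
  obtain ⟨k, c', hk, hc', hs', hin, hleft⟩ :=
    (hc.applyMove_of_legal hl).exists_iterate_leftMove_settled
  refine ⟨k + 1, c', ?_, hc', hs', hin.trans (input_applyMove_of_lt hm),
    fun j x h => hleft j x (leftOf_applyMove_of_lt hm hl h)⟩
  rwa [Function.iterate_succ_apply, greedyStep_of_eq_some hlm]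
termination_by positionSum t n c

lemma exists_head_le_of_legal_eq_false {t m y : ℕ} {l : List ℕ} {c : Conf} (h0 : 0 < m)
    (hm : m < t) (hl : legal t c m = false) (hs : c.stack m = y :: l) :
    ∃ z u, c.stack (m-1) = z :: u ∧ z ≤ y := by
  have hp : canPush y (c.stack (m-1)) = false := by
    by_contra hp
    simp [(legal_shift_iff h0 hm).2 ⟨y, l, hs, by simpa using hp⟩] at hl
  cases hs' : c.stack (m-1) with
  | nil => simp [hs', canPush] at hp
  | cons z u => exact ⟨z, u, rfl, by simpa [hs', canPush] using hp⟩

/-- The stack tops increase from stack `m` rightwards. -/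
lemma Conf.Valid.le_of_mem_stack_of_right_illegal {t n m x : ℕ} {s : List ℕ} {c : Conf}
    (hc : c.Valid t n) (hs : c.stack m = x :: s)
    (hright : ∀ m', m < m' → m' < t → legal t c m' = false) :
    ∀ i, m ≤ i → ∀ z ∈ c.stack i, x ≤ z := by
  refine Nat.le_induction (fun z hz => hc.head_le_of_mem_stack hs hz) fun i hmi ih z hz => ?_
  obtain ⟨y, l, hy⟩ := List.exists_cons_of_ne_nil (List.ne_nil_of_mem hz)
  obtain ⟨w, u, hw, hwy⟩ := exists_head_le_of_legal_eq_false (Nat.succ_pos i)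
    (hc.lt_of_mem_stack hz) (hright _ (by omega) (hc.lt_of_mem_stack hz)) hy
  have := ih w (hw ▸ List.mem_cons_self)
  have := hc.head_le_of_mem_stack hy hz
  omega

structure Ahead (t n : ℕ) (cl cr : Conf) : Prop where
  valid_left : cl.Valid t n
  valid_right : cr.Valid t n
  input_eq : cl.input = cr.input
  settled : Settled t cl
  leftOf : ∀ j x, cr.LeftOf j x → cl.LeftOf j x

namespace Ahead

variable {t n : ℕ} {cl cr : Conf}

lemma output_length_le (I : Ahead t n cl cr) : cr.output.length ≤ cl.output.length := by
  have hnd : cr.output.Nodup := I.valid_right.output_eq ▸ List.nodup_range'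
  exact (hnd.subperm fun x hx =>
    leftOf_zero_iff.1 (I.leftOf 0 x (leftOf_zero_iff.2 hx))).length_le

lemma exists_mem_stack_of_mem_stack (I : Ahead t n cl cr) {j x : ℕ} (h : x ∈ cl.stack j) :
    ∃ i, j ≤ i ∧ x ∈ cr.stack i := by
  have hx := I.valid_left.mem_range' (mem_contents.2 (.inr (.inl ⟨j, h⟩)))
  rcases mem_contents.1 (I.valid_right.perm.symm.subset hx) with ho | ⟨i, hi⟩ | hin
  · exact absurd (I.leftOf j x (.inl ho)) (I.valid_left.not_leftOf_of_mem_stack h)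
  · refine ⟨i, not_lt.1 fun hij => ?_, hi⟩
    exact I.valid_left.not_leftOf_of_mem_stack h (I.leftOf j x (.inr ⟨i, hij, hi⟩))
  · exact absurd (I.input_eq ▸ hin) (I.valid_left.not_mem_input_of_mem_stack h)

lemma applyMove_zero (I : Ahead t n cl cr) (hl : legal t cr 0 = true) :
    Ahead t n cl (applyMove t cr 0) := by
  obtain ⟨s, hs⟩ := legal_zero_iff.1 hl
  have ht : 0 < t := I.valid_right.lt_of_mem_stack (hs ▸ List.mem_cons_self)
  refine ⟨I.valid_left, I.valid_right.applyMove_of_legal hl,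
    I.input_eq.trans (input_applyMove_of_lt ht).symm, I.settled, fun j y hy => ?_⟩
  rcases (leftOf_applyMove_zero_iff hs).1 hy with hy | rfl
  · exact I.leftOf j y hy
  refine .inl ?_
  -- The popped element cannot still be in stack `0` of `cl`: it would be its top, and then
  -- `cl` could pop it, contradicting settledness.
  rcases I.leftOf 1 _ (.inr ⟨0, zero_lt_one, hs ▸ List.mem_cons_self⟩) with
    ho | ⟨i, hi, hx⟩
  · exact ho
  obtain rfl : i = 0 := by omega
  obtain ⟨z, u, hz⟩ := List.exists_cons_of_ne_nil (List.ne_nil_of_mem hx)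
  have h1 := I.valid_left.head_le_of_mem_stack hz hx
  have h2 := I.valid_left.output_length_lt_of_mem_stack (hz ▸ List.mem_cons_self)
  have h3 := I.output_length_le
  have := I.settled 0 ht
  rw [legal_zero_iff.2 ⟨u, by rw [hz]; congr; omega⟩] at this
  contradiction

lemma applyMove_shift (I : Ahead t n cl cr) {m : ℕ} (h0 : 0 < m) (hm : m < t)
    (hl : legal t cr m = true) (hright : ∀ m', m < m' → m' < t → legal t cr m' = false) :
    Ahead t n cl (applyMove t cr m) := by
  obtain ⟨x, s, hs, hx⟩ := (legal_shift_iff h0 hm).1 hl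
  refine ⟨I.valid_left, I.valid_right.applyMove_of_legal hl,
    I.input_eq.trans (input_applyMove_of_lt hm).symm, I.settled, fun j y hy => ?_⟩
  rcases (leftOf_applyMove_shift_iff h0 hm hs).1 hy with hy | ⟨rfl, hmj⟩
  · exact I.leftOf j y hy
  refine LeftOf.mono hmj (by_contra fun hnot => ?_)
  have hxl : y ∈ cl.stack m := by
    rcases I.leftOf (m+1) y (.inr ⟨m, m.lt_succ_self, hs ▸ List.mem_cons_self⟩) with
      ho | ⟨i, hi, hyi⟩
    · exact absurd (.inl ho) hnot
    · obtain rfl : i = m := by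
        by_contra hne
        exact hnot (.inr ⟨i, by omega, hyi⟩)
      exact hyi
  -- Since `cl` cannot shift its stack `m`, the top `w` of its stack `m - 1` is below `y`;
  -- but in `cr` the element `w` lies in a stack at least `m - 1`, where everything is above `y`.
  obtain ⟨w₀, l₀, hw₀⟩ := List.exists_cons_of_ne_nil (List.ne_nil_of_mem hxl)
  obtain ⟨w, u, hw, hww₀⟩ := exists_head_le_of_legal_eq_false h0 hm (I.settled m hm) hw₀
  have hwm : w ∈ cl.stack (m-1) := hw ▸ List.mem_cons_self
  have hwy : w < y := by
    have hw₀y := I.valid_left.head_le_of_mem_stack hw₀ hxl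
    refine lt_of_le_of_ne (hww₀.trans hw₀y) fun hwy => ?_
    have := I.valid_left.eq_of_mem_stack_of_mem_stack hwm (hwy ▸ hxl)
    omega
  obtain ⟨i, hi, hwi⟩ := I.exists_mem_stack_of_mem_stack hwm
  rcases eq_or_ne i (m-1) with rfl | hne
  · obtain ⟨z, v, hz⟩ := List.exists_cons_of_ne_nil (List.ne_nil_of_mem hwi)
    have := I.valid_right.head_le_of_mem_stack hz hwi
    rw [hz, canPush_cons] at hx
    omega
  · have := I.valid_right.le_of_mem_stack_of_right_illegal hs hright i (by omega) w hwi
    omega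

lemma legal_push (I : Ahead t n cl cr) (ht : 0 < t) (hl : legal t cr t = true) :
    legal t cl t = true := by
  obtain ⟨x, r, hr, hx⟩ := (legal_push_iff ht).1 hl
  refine (legal_push_iff ht).2 ⟨x, r, I.input_eq.trans hr, ?_⟩
  cases hw : cl.stack (t-1) with
  | nil => rfl
  | cons w u =>
    obtain ⟨i, hi, hwi⟩ := I.exists_mem_stack_of_mem_stack (hw ▸ List.mem_cons_self)
    obtain rfl : i = t - 1 := by have := I.valid_right.lt_of_mem_stack hwi; omega
    obtain ⟨z, v, hz⟩ := List.exists_cons_of_ne_nil (List.ne_nil_of_mem hwi)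
    have := I.valid_right.head_le_of_mem_stack hz hwi
    rw [hz, canPush_cons] at hx
    rw [canPush_cons]
    omega

lemma leftOf_applyMove_push (I : Ahead t n cl cr) (ht : 0 < t) (hl : legal t cr t = true)
    {j y : ℕ} (h : (applyMove t cr t).LeftOf j y) : (applyMove t cl t).LeftOf j y := by
  obtain ⟨x, r, hr, -⟩ := (legal_push_iff ht).1 hl
  rw [leftOf_applyMove_push_iff ht I.valid_right.length_stks hr] at h
  rw [leftOf_applyMove_push_iff ht I.valid_left.length_stks (I.input_eq.trans hr)]
  exact h.imp_left (I.leftOf j y)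

lemma exists_iterate_leftMove (I : Ahead t n cl cr) :
    ∃ k, Ahead t n ((greedyStep leftMove t)^[k] cl) (greedyStep rightMove t cr) := by
  cases hr : rightMove t cr with
  | none => exact ⟨0, by rwa [greedyStep, hr]⟩
  | some m =>
    obtain ⟨hl, hmax⟩ := rightMove_eq_some hr
    rw [greedyStep_of_eq_some hr]
    rcases Nat.eq_zero_or_pos m with rfl | h0
    · exact ⟨0, I.applyMove_zero hl⟩
    rcases (le_of_legal hl).lt_or_eq with hm | rfl
    · refine ⟨0, I.applyMove_shift h0 hm hl fun m' hm' _ => ?_⟩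
      by_contra hl'
      exact hm'.not_ge (hmax m' (by simpa using hl'))
    have hll := I.legal_push h0 hl
    obtain ⟨k, c', hk, hc', hs', hin, hleft⟩ :=
      (I.valid_left.applyMove_of_legal hll).exists_iterate_leftMove_settled
    obtain ⟨x, r, hr, -⟩ := (legal_push_iff h0).1 hl
    refine ⟨k + 1, ?_⟩
    rw [Function.iterate_succ_apply,
      greedyStep_of_eq_some (leftMove_eq_some_of_settled I.settled hll), hk]
    refine ⟨hc', I.valid_right.applyMove_of_legal hl, ?_, hs',
      fun j y h => hleft j y (I.leftOf_applyMove_push h0 hl h)⟩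
    rw [hin, input_applyMove_push h0 hr, input_applyMove_push h0 (I.input_eq.trans hr)]

lemma exists_iterate_leftMove_iterate (I : Ahead t n cl cr) (k : ℕ) :
    ∃ k', Ahead t n ((greedyStep leftMove t)^[k'] cl) ((greedyStep rightMove t)^[k] cr) := by
  induction k with
  | zero => exact ⟨0, I⟩
  | succ k ih =>
    obtain ⟨k', hk'⟩ := ih
    obtain ⟨k'', hk''⟩ := hk'.exists_iterate_leftMove
    exact ⟨k'' + k', by rwa [Function.iterate_add_apply, Function.iterate_succ_apply']⟩

lemma eq_finalConf (I : Ahead t n cl (finalConf t n)) : cl = finalConf t n := by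
  have hsub : List.range' 1 n ⊆ cl.output := fun x hx =>
    leftOf_zero_iff.1 (I.leftOf 0 x (leftOf_zero_iff.2 hx))
  have hn : n ≤ cl.output.length := by
    simpa using ((List.nodup_range' (s := 1) (n := n)).subperm hsub).length_le
  have hlen := I.valid_left.perm.length_eq
  simp only [contents, List.length_append, List.length_range'] at hlen
  have hfl : cl.stks.flatten = [] := List.eq_nil_of_length_eq_zero (by omega)
  have hout : cl.output = List.range' 1 n := by
    rw [I.valid_left.output_eq]; congr; omega
  have hstks : cl.stks = List.replicate t [] :=
    List.eq_replicate_iff.2 ⟨I.valid_left.length_stks, List.flatten_eq_nil_iff.1 hfl⟩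
  have hin : cl.input = [] := I.input_eq
  cases cl
  simp_all [finalConf]

end Ahead

lemma stack_initConf (t : ℕ) (p : List ℕ) (j : ℕ) : (initConf t p).stack j = [] := by
  simp only [initConf, stack_mk, List.getD_eq_getElem?_getD, List.getElem?_replicate]
  split <;> rfl

lemma ahead_initConf {t n : ℕ} {p : List ℕ} (hp : IsPermOf n p) :
    Ahead t n (initConf t p) (initConf t p) := by
  have hc : (initConf t p).Valid t n :=
    ⟨by simp [initConf], rfl, fun j => by simp [stack_initConf],
      by simpa [contents, initConf, IsPermOf] using hp⟩
  refine ⟨hc, hc, rfl, fun m hm => ?_, fun _ _ h => h⟩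
  rcases Nat.eq_zero_or_pos m with rfl | h0
  · simpa [stack_initConf] using legal_zero_iff (t := t) (c := initConf t p)
  · simpa [stack_initConf] using legal_shift_iff (c := initConf t p) h0 hm

/-- Every permutation sorted by the right-greedy algorithm on `t` stacks in series
is also sorted by the left-greedy algorithm on `t` stacks in series. -/
theorem stmt3 (t n : ℕ) (p : List ℕ) (hp : IsPermOf n p)
    (h : RightGreedySorts t p) : LeftGreedySorts t p := by
  obtain ⟨k, hk⟩ := h
  have hlen : p.length = n := hp.length_eq.trans List.length_range'
  obtain ⟨k', hk'⟩ := (ahead_initConf (t := t) hp).exists_iterate_leftMove_iterate k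
  rw [hk, hlen] at hk'
  exact ⟨k', hlen ▸ hk'.eq_finalConf⟩
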